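/- For each x > 0 let u_x : [0, x] → ℝ be the strictly increasing solution of u'' = u², u(0) = 0, u(x) = 1, and suppose u_x(y) = 6·℘_{Λ_{ω_x}}(y + 2ω_x/3) where ω_x > 0 and Λ_ω = {m·(ω/√3)·e^{iπ/6} + n·(ω/√3)·e^{iπ/2} : m, n ∈ ℤ}. Set c₁ = ω₁/3 and C₁ = 6·c₁³·℘'_{Λ_{ω₁}}(2ω₁/3), where ω₁ is the period corresponding to x = 1. Then for each fixed y > 0, lim_{x→∞} x³·u_x(y) = C₁·y. -/

import Mathlib

/-!
Since `Λ_ω = ω Λ₁`, the hypothesis reads `u_x(y) = 6 ω_x⁻² ℘(y/ω_x + 2/3)` with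
`℘ = ℘_{Λ₁}`, and the real points of `Λ₁` are the integers. On `[0, x)` the function `u_x`
takes values in `[0, 1)`, while `℘` has a pole at `1`; hence `x/ω_x < 1/3`. The
normalisation `u_x(x) = 1` forces `‖℘(x/ω_x + 2/3)‖ = ω_x²/6 ≥ 3x²/2 → ∞`, so
`x/ω_x → 1/3`. Finally `℘(2/3) = 0` (from `u_1(0) = 0`), so
`x³ u_x(y) = 6y (x/ω_x)³ · ℘(y/ω_x + 2/3)/(y/ω_x) → (2/9) ℘'(2/3) y`,
which is `C₁ y` once the scaling is undone.
-/

open Set Filter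

/-- The Weierstrass ℘-function of the lattice `Λ`. -/
noncomputable def wp (Λ : Set ℂ) (z : ℂ) : ℂ :=
  1 / z ^ 2 + ∑' l : {l : ℂ // l ∈ Λ ∧ l ≠ 0}, (1 / (z - (l : ℂ)) ^ 2 - 1 / (l : ℂ) ^ 2)

/-- The lattice `Λ_ω` generated by `(ω/√3) e^{iπ/6}` and `(ω/√3) e^{iπ/2}`. -/
noncomputable def Lomega (ω : ℝ) : Set ℂ :=
  {z : ℂ | ∃ m n : ℤ,
    z = (m : ℂ) * (((ω / Real.sqrt 3 : ℝ) : ℂ) * Complex.exp ((Real.pi : ℂ) * Complex.I / 6)) +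
        (n : ℂ) * (((ω / Real.sqrt 3 : ℝ) : ℂ) * Complex.exp ((Real.pi : ℂ) * Complex.I / 2))}

open scoped Pointwise
open PeriodPair Real Topology

lemma lt_of_forall_le_of_tendsto_atTop {h : ℝ → ℝ} {a b c M : ℝ} (hab : a < b)
    (hb : Tendsto h (𝓝[<] b) atTop) (hM : ∀ s ∈ Ico a c, h s ≤ M) : c < b := by
  by_contra! hbc
  obtain ⟨s, hs, hsM⟩ := ((hb.eventually_gt_atTop M).and (Ioo_mem_nhdsLT hab)).exists
  exact (hM s ⟨hsM.1.le, hsM.2.trans_le hbc⟩).not_gt hs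

lemma tendsto_nhds_of_tendsto_comp_atTop {ι : Type*} {l : Filter ι} {h : ℝ → ℝ} {a b : ℝ}
    (hh : ContinuousOn h (Ico a b)) {s : ι → ℝ} (hs : ∀ᶠ i in l, s i ∈ Ico a b)
    (hhs : Tendsto (h ∘ s) l atTop) : Tendsto s l (𝓝 b) := by
  refine tendsto_order.2 ⟨fun c hc => ?_, fun c hc => hs.mono fun i hi => hi.2.trans hc⟩
  obtain ⟨M, hM⟩ := (isCompact_Icc (a := a) (b := c)).bddAbove_image
    (hh.mono (Icc_subset_Ico_right hc))
  filter_upwards [hs, hhs.eventually_gt_atTop M] with i hi hiM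
  by_contra! hic
  exact hiM.not_ge (hM ⟨s i, ⟨hi.1, hic⟩, rfl⟩)

lemma tendsto_slope_of_hasDerivAt {ι : Type*} {l : Filter ι} {f : ℂ → ℂ} {d : ℂ} {a : ℝ}
    (hf : HasDerivAt f d a) (ha : f a = 0) {r : ι → ℝ} (hr : Tendsto r l (𝓝[>] 0)) :
    Tendsto (fun i => f ((r i + a : ℝ)) / r i) l (𝓝 d) := by
  have hslope := (hasDerivAt_iff_tendsto_slope_zero.1 hf).comp
    ((Complex.continuous_ofReal.continuousWithinAt.tendsto_nhdsWithin
      fun t (ht : t ≠ 0) => by simpa using ht).comp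
        (hr.mono_right (nhdsWithin_mono _ fun t ht => (Set.mem_Ioi.1 ht).ne')))
  refine hslope.congr fun i => ?_
  simp [ha, div_eq_inv_mul, add_comm]

-- No summability is needed: `tsum_mul_left` holds unconditionally in a division ring.
theorem wp_smul (Λ : Set ℂ) {c : ℂ} (hc : c ≠ 0) (z : ℂ) :
    wp (c • Λ) (c * z) = (c ^ 2)⁻¹ * wp Λ z := by
  let e : {l : ℂ // l ∈ Λ ∧ l ≠ 0} ≃ {l : ℂ // l ∈ c • Λ ∧ l ≠ 0} :=
    (Equiv.mulLeft₀ c hc).subtypeEquiv fun l => by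
      simp [← smul_eq_mul, Set.smul_mem_smul_set_iff₀ hc, hc]
  rw [wp, wp, ← e.tsum_eq, mul_add, ← tsum_mul_left]
  congr 1
  · field_simp
  · refine tsum_congr fun l => ?_
    change 1 / (c * z - c * l) ^ 2 - 1 / (c * l) ^ 2 = _
    rw [← mul_sub]
    field_simp

-- `℘[L]` also sums over `l = 0`, whose term is `1 / z ^ 2` because `1 / 0 = 0`.
theorem wp_eq_weierstrassP (L : PeriodPair) : wp L.lattice = ℘[L] := by
  ext z
  set f : ℂ → ℂ := fun l => 1 / (z - l) ^ 2 - 1 / l ^ 2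
  have hL := tsum_subtype (L.lattice : Set ℂ) fun l => if l = 0 then 0 else f l
  have hL0 := tsum_subtype {l | l ∈ L.lattice ∧ l ≠ 0} f
  rw [← L.weierstrassPExcept_add ⟨0, zero_mem _⟩, wp, weierstrassPExcept, add_comm]
  simp only [sub_zero, ne_eq, OfNat.ofNat_ne_zero, not_false_eq_true, zero_pow, div_zero]
  refine congrArg₂ _ (hL0.trans (hL.trans ?_).symm) rfl
  congr 1
  ext l
  by_cases h : l ∈ L.lattice <;> by_cases h0 : l = 0 <;> simp [Set.indicator, h, h0]

lemma PeriodPair.tendsto_norm_weierstrassP_nhdsNE (L : PeriodPair) {l₀ : ℂ}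
    (h : l₀ ∈ L.lattice) : Tendsto (‖℘[L] ·‖) (𝓝[≠] l₀) atTop :=
  tendsto_norm_atTop_iff_cobounded.2 <|
    tendsto_cobounded_of_meromorphicOrderAt_neg (by rw [L.order_weierstrassP l₀ h]; decide)

theorem Lomega_eq_smul (ω : ℝ) : Lomega ω = (ω : ℂ) • Lomega 1 := by
  ext z
  simp only [Lomega, Set.mem_smul_set, Set.mem_ofPred_eq, smul_eq_mul]
  constructor
  · rintro ⟨m, n, rfl⟩
    exact ⟨_, ⟨m, n, rfl⟩, by push_cast; ring⟩
  · rintro ⟨_, ⟨m, n, rfl⟩, rfl⟩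
    exact ⟨m, n, by push_cast; ring⟩

lemma one_div_sqrt_three_mul_exp_pi_mul_I_div_six :
    ((1 / √3 : ℝ) * Complex.exp (π * Complex.I / 6) : ℂ) = 1 / 2 + √3 / 6 * Complex.I := by
  have h : (π * Complex.I / 6 : ℂ) = ((π / 6 : ℝ) : ℂ) * Complex.I := by push_cast; ring
  rw [h, Complex.exp_mul_I, ← Complex.ofReal_cos, ← Complex.ofReal_sin, cos_pi_div_six,
    sin_pi_div_six]
  have h3 : (√3 : ℂ) ^ 2 = 3 := by norm_cast; simp
  have : (√3 : ℂ) ≠ 0 := by norm_cast; positivity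
  push_cast
  field_simp
  linear_combination -2 * Complex.I * h3

lemma one_div_sqrt_three_mul_exp_pi_mul_I_div_two :
    ((1 / √3 : ℝ) * Complex.exp (π * Complex.I / 2) : ℂ) = √3 / 3 * Complex.I := by
  rw [mul_div_right_comm, Complex.exp_pi_div_two_mul_I]
  have h3 : (√3 : ℂ) ^ 2 = 3 := by norm_cast; simp
  have : (√3 : ℂ) ≠ 0 := by norm_cast; positivity
  push_cast
  field_simp
  linear_combination -h3

noncomputable def hexPeriodPair : PeriodPair where
  ω₁ := ((1 / √3 : ℝ) : ℂ) * Complex.exp (π * Complex.I / 6)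
  ω₂ := ((1 / √3 : ℝ) : ℂ) * Complex.exp (π * Complex.I / 2)
  indep := by
    rw [LinearIndependent.pair_iff, one_div_sqrt_three_mul_exp_pi_mul_I_div_six,
      one_div_sqrt_three_mul_exp_pi_mul_I_div_two]
    intro s t h
    have hs : s = 0 := by simpa using congrArg Complex.re h
    subst hs
    simpa using congrArg Complex.im h

lemma hexPeriodPair_ω₁ : hexPeriodPair.ω₁ = 1 / 2 + √3 / 6 * Complex.I :=
  one_div_sqrt_three_mul_exp_pi_mul_I_div_six

lemma hexPeriodPair_ω₂ : hexPeriodPair.ω₂ = √3 / 3 * Complex.I :=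
  one_div_sqrt_three_mul_exp_pi_mul_I_div_two

lemma lattice_hexPeriodPair : (hexPeriodPair.lattice : Set ℂ) = Lomega 1 := by
  ext z
  simp only [SetLike.mem_coe, mem_lattice, Lomega, Set.mem_ofPred_eq, eq_comm]
  rfl

lemma ofReal_mem_lattice_hexPeriodPair {t : ℝ} :
    (t : ℂ) ∈ hexPeriodPair.lattice ↔ ∃ k : ℤ, t = k := by
  rw [mem_lattice, hexPeriodPair_ω₁, hexPeriodPair_ω₂]
  constructor
  · rintro ⟨m, n, h⟩
    have hre : (m : ℝ) * 2⁻¹ = t := by simpa using congrArg Complex.re h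
    have him : (m : ℝ) * (√3 / 6) + n * (√3 / 3) = 0 := by simpa using congrArg Complex.im h
    refine ⟨-n, ?_⟩
    push_cast
    nlinarith [Real.sqrt_pos.2 (show (0 : ℝ) < 3 by norm_num)]
  · rintro ⟨k, rfl⟩
    exact ⟨2 * k, -k, by push_cast; ring⟩

local notation "℘₁" => ℘[hexPeriodPair]

lemma wp_Lomega {ω : ℝ} (hω : ω ≠ 0) (z : ℂ) :
    wp (Lomega ω) z = ((ω : ℂ) ^ 2)⁻¹ * ℘₁ (z / ω) := by
  have hωc : (ω : ℂ) ≠ 0 := by exact_mod_cast hω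
  have := wp_smul (Lomega 1) hωc (z / ω)
  rwa [mul_div_cancel₀ _ hωc, ← Lomega_eq_smul, ← lattice_hexPeriodPair,
    wp_eq_weierstrassP] at this

lemma deriv_wp_Lomega {ω : ℝ} (hω : ω ≠ 0) (z : ℂ) :
    deriv (wp (Lomega ω)) z = ((ω : ℂ) ^ 3)⁻¹ * deriv ℘₁ (z / ω) := by
  simp_rw [funext (wp_Lomega hω), div_eq_inv_mul, deriv_const_mul_field', deriv_comp_mul_left,
    smul_eq_mul]
  ring

lemma differentiableAt_weierstrassP_hex_ofReal {t : ℝ} (h0 : 0 < t) (h1 : t < 1) :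
    DifferentiableAt ℂ ℘₁ t := by
  refine hexPeriodPair.differentiableOn_weierstrassP.differentiableAt
    (hexPeriodPair.isClosed_lattice.isOpen_compl.mem_nhds ?_)
  intro hmem
  obtain ⟨k, rfl⟩ := ofReal_mem_lattice_hexPeriodPair.1 hmem
  have : (0 : ℤ) < k := by exact_mod_cast h0
  have : k < (1 : ℤ) := by exact_mod_cast h1
  omega

lemma continuousOn_norm_weierstrassP_hex :
    ContinuousOn (fun t : ℝ => ‖℘₁ t‖) (Ico (2 / 3) 1) := fun t ht =>
  ((differentiableAt_weierstrassP_hex_ofReal (by linarith [ht.1]) ht.2).continuousAt.comp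
    Complex.continuous_ofReal.continuousAt).norm.continuousWithinAt

lemma tendsto_norm_weierstrassP_hex_nhdsLT_one :
    Tendsto (fun t : ℝ => ‖℘₁ t‖) (𝓝[<] 1) atTop := by
  have hone : ((1 : ℝ) : ℂ) ∈ hexPeriodPair.lattice :=
    ofReal_mem_lattice_hexPeriodPair.2 ⟨1, by simp⟩
  refine (hexPeriodPair.tendsto_norm_weierstrassP_nhdsNE hone).comp ?_
  refine (Complex.continuous_ofReal.continuousWithinAt.tendsto_nhdsWithin
    fun t (ht : t ≠ 1) => by simpa using ht).mono_left
      (nhdsWithin_mono _ fun t ht => (Set.mem_Iio.1 ht).ne)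

lemma weierstrassP_hex_eq_of_eq_wp_Lomega {ω t v : ℝ} (hω : ω ≠ 0)
    (h : (v : ℂ) = 6 * wp (Lomega ω) (t + 2 * ω / 3)) :
    ℘₁ ((t / ω + 2 / 3 : ℝ)) = ((ω ^ 2 / 6 * v : ℝ) : ℂ) := by
  have hωc : (ω : ℂ) ≠ 0 := by exact_mod_cast hω
  push_cast
  rw [h, wp_Lomega hω]
  field_simp

lemma three_mul_lt_of_strictMonoOn {f : ℝ → ℝ} {ω x : ℝ} (hω : 0 < ω)
    (hmono : StrictMonoOn f (Icc 0 x)) (h0 : f 0 = 0) (h1 : f x = 1)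
    (hf : ∀ t ∈ Icc 0 x, ℘₁ ((t / ω + 2 / 3 : ℝ)) = ((ω ^ 2 / 6 * f t : ℝ) : ℂ)) :
    3 * x < ω := by
  suffices x / ω + 2 / 3 < 1 by
    rw [div_add' _ _ _ hω.ne', div_lt_one hω] at this
    linarith
  refine lt_of_forall_le_of_tendsto_atTop (a := 2 / 3) (M := ω ^ 2 / 6) (by norm_num)
    tendsto_norm_weierstrassP_hex_nhdsLT_one fun s hs => ?_
  set t := (s - 2 / 3) * ω
  have hst : t / ω + 2 / 3 = s := by field_simp; ring
  have ht : t ∈ Ico 0 x :=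
    ⟨mul_nonneg (by linarith [hs.1]) hω.le, (lt_div_iff₀ hω).1 (by linarith [hs.2])⟩
  have hx : 0 ≤ x := ht.1.trans ht.2.le
  have hft_nonneg : 0 ≤ f t :=
    h0 ▸ hmono.monotoneOn ⟨le_rfl, hx⟩ (Ico_subset_Icc_self ht) ht.1
  have hft_lt : f t < 1 := h1 ▸ hmono (Ico_subset_Icc_self ht) ⟨hx, le_rfl⟩ ht.2
  rw [← hst, hf t (Ico_subset_Icc_self ht), Complex.norm_real, Real.norm_eq_abs,
    abs_of_nonneg (by positivity)]
  nlinarith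

lemma tendsto_div_nhds_one_third {ω : ℝ → ℝ} (hlt : ∀ x > 0, 3 * x < ω x)
    (hnorm : ∀ x > 0, ‖℘₁ ((x / ω x + 2 / 3 : ℝ))‖ = ω x ^ 2 / 6) :
    Tendsto (fun x => x / ω x) atTop (𝓝 (1 / 3)) := by
  have hmem : ∀ᶠ x in atTop, x / ω x + 2 / 3 ∈ Ico (2 / 3 : ℝ) 1 := by
    filter_upwards [eventually_gt_atTop 0] with x hx
    have hω : 0 < ω x := by linarith [hlt x hx]
    constructor
    · have : 0 ≤ x / ω x := by positivity
      linarith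
    · have : x / ω x < 1 / 3 := by rw [div_lt_iff₀ hω]; linarith [hlt x hx]
      linarith
  have hblowup : Tendsto (fun x => ‖℘₁ ((x / ω x + 2 / 3 : ℝ))‖) atTop atTop := by
    refine tendsto_atTop_mono' _ ?_ ((tendsto_pow_atTop two_ne_zero).atTop_mul_const
      (show (0 : ℝ) < 9 / 6 by norm_num))
    filter_upwards [eventually_gt_atTop 0] with x hx
    rw [hnorm x hx]
    nlinarith [hlt x hx]
  convert (tendsto_nhds_of_tendsto_comp_atTop continuousOn_norm_weierstrassP_hex hmem
    hblowup).sub_const (2 / 3 : ℝ) using 2 <;> ring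

lemma tendsto_pow_three_mul_of_weierstrassP_hex {ω : ℝ → ℝ} {u : ℝ → ℝ → ℝ} (hlt : ∀ x > 0, 3 * x < ω x)
    (hP : ∀ x > 0, ∀ t ∈ Icc 0 x,
      ℘₁ ((t / ω x + 2 / 3 : ℝ)) = ((ω x ^ 2 / 6 * u x t : ℝ) : ℂ))
    (hux : ∀ x > 0, u x x = 1) (hzero : ℘₁ ((2 / 3 : ℝ)) = 0) {y : ℝ} (hy : 0 < y) :
    Tendsto (fun x : ℝ => (x : ℂ) ^ 3 * (u x y : ℂ)) atTop
      (𝓝 (2 / 9 * deriv ℘₁ ((2 / 3 : ℝ)) * y)) := by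
  have hω : ∀ x > 0, 0 < ω x := fun x hx => by linarith [hlt x hx]
  have hratio := tendsto_div_nhds_one_third hlt fun x hx => by
    rw [hP x hx x ⟨hx.le, le_rfl⟩, hux x hx]
    simp
  have hsmall : Tendsto (fun x => y / ω x) atTop (𝓝[>] 0) := by
    have hω_top : Tendsto ω atTop atTop := tendsto_atTop_mono' _
      (eventually_gt_atTop 0 |>.mono fun x hx => (hlt x hx).le)
      (tendsto_id.const_mul_atTop three_pos)
    exact tendsto_nhdsWithin_iff.2 ⟨tendsto_const_nhds.div_atTop hω_top,
      eventually_gt_atTop 0 |>.mono fun x hx => div_pos hy (hω x hx)⟩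
  have hder := (differentiableAt_weierstrassP_hex_ofReal (t := 2 / 3) (by norm_num)
    (by norm_num)).hasDerivAt
  have hlim := ((Complex.continuous_ofReal.tendsto _).comp hratio |>.pow 3 |>.const_mul
    (6 * (y : ℂ))).mul (tendsto_slope_of_hasDerivAt hder hzero hsmall)
  convert hlim.congr' ?_ using 2
  · push_cast
    ring
  filter_upwards [eventually_ge_atTop y] with x hx
  have hyc : (y : ℂ) ≠ 0 := by exact_mod_cast hy.ne'
  have hωx : (ω x : ℂ) ≠ 0 := by exact_mod_cast (hω x (hy.trans_le hx)).ne'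
  rw [Function.comp_apply, hP x (hy.trans_le hx) y ⟨hy.le, hx⟩]
  push_cast
  field_simp

/-- If for each `x > 0`, `u x (y) = 6 ℘_{Λ_{ω_x}}(y + 2ω_x/3)` is the strictly increasing
solution of `u'' = u²`, `u(0) = 0`, `u(x) = 1` on `[0, x]` with `ω x > 0`, then for each
fixed `y > 0`, `x³ u_x(y) → C₁ y` where `C₁ = 6 c₁³ ℘'_{Λ_{ω₁}}(2ω₁/3)` and `c₁ = ω₁/3`. -/
theorem cubic_hitting_asymptotics
    (ω : ℝ → ℝ) (u : ℝ → ℝ → ℝ)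
    (hyp : ∀ x : ℝ, 0 < x →
      0 < ω x ∧
      ContinuousOn (u x) (Icc 0 x) ∧
      StrictMonoOn (u x) (Icc 0 x) ∧
      (∀ y ∈ Ioo 0 x, deriv (deriv (u x)) y = (u x y) ^ 2) ∧
      u x 0 = 0 ∧ u x x = 1 ∧
      (∀ y ∈ Icc 0 x, ((u x y : ℂ)) =
        6 * wp (Lomega (ω x)) ((y : ℂ) + 2 * ((ω x : ℝ) : ℂ) / 3))) :
    ∀ y : ℝ, 0 < y →
      Tendsto (fun x : ℝ => ((x : ℂ)) ^ 3 * ((u x y : ℝ) : ℂ)) atTop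
        (nhds (6 * (((ω 1 : ℝ) : ℂ) / 3) ^ 3 *
          deriv (wp (Lomega (ω 1))) (((2 * ω 1 / 3 : ℝ) : ℂ)) * (y : ℂ))) := by
  intro y hy
  have hP : ∀ x > 0, ∀ t ∈ Icc 0 x,
      ℘₁ ((t / ω x + 2 / 3 : ℝ)) = ((ω x ^ 2 / 6 * u x t : ℝ) : ℂ) := fun x hx t ht =>
    weierstrassP_hex_eq_of_eq_wp_Lomega (hyp x hx).1.ne' ((hyp x hx).2.2.2.2.2.2 t ht)
  have hlt : ∀ x > 0, 3 * x < ω x := fun x hx =>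
    three_mul_lt_of_strictMonoOn (hyp x hx).1 (hyp x hx).2.2.1 (hyp x hx).2.2.2.2.1
      (hyp x hx).2.2.2.2.2.1 (hP x hx)
  obtain ⟨hω1, -, -, -, hu1, -, -⟩ := hyp 1 one_pos
  have hzero : ℘₁ ((2 / 3 : ℝ)) = 0 := by
    simpa [hu1] using hP 1 one_pos 0 ⟨le_rfl, zero_le_one⟩
  have hω1c : (ω 1 : ℂ) ≠ 0 := by exact_mod_cast hω1.ne'
  have harg : ((2 * ω 1 / 3 : ℝ) : ℂ) / ω 1 = (2 / 3 : ℝ) := by push_cast; field_simp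
  convert tendsto_pow_three_mul_of_weierstrassP_hex hlt hP (fun x hx => (hyp x hx).2.2.2.2.2.1) hzero hy using 2
  rw [deriv_wp_Lomega hω1.ne', harg]
  field_simp
  ring
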